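/- arXiv:1408.3183 — 4 statements merged into one kernel-verified Lean document; each statement's English description precedes it below -/
import Mathlib

section
/- Let k > 1/2 be real and ν := (−1 + i·√(4k² − 1))/2. Then for every real z with −1 < z ≤ 1, the value P_ν(z) is a real number and P_ν(z) ≥ 1. Consequently, with C_k := −1/(4·sin(νπ)) > 0, the function z ↦ C_k·P_ν(z) is strictly positive on (−1, 1]; in particular the fundamental solution G_k(x, x₀) = C_k·P_ν(−⟨x, x₀⟩) of the Yukawa–Beltrami operator never vanishes or changes sign for x ≠ x₀ on the unit sphere. -/
open Polynomial

/-- The Legendre function of the first kind of degree `ν`, defined by its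
hypergeometric series. -/
noncomputable def legendreP (ν : ℂ) (z : ℂ) : ℂ :=
  ∑' n : ℕ, ((ascPochhammer ℂ n).eval (-ν) * (ascPochhammer ℂ n).eval (ν + 1))
      / ((n.factorial : ℂ))^2 * ((1 - z) / 2)^n

/-!
Since `P_ν(z) = ₂F₁(-ν, ν + 1; 1; (1 - z) / 2)`, the series converges for `-1 < z ≤ 1`. When
`Re ν = -1/2` one has `-ν = conj (ν + 1)`, so for real `z` the `n`-th term is
`|(ν + 1)_n|² / (n!)² · ((1 - z) / 2)ⁿ ≥ 0` and the zeroth term is `1`; hence `P_ν(z)` is real and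
at least `1`. Moreover `νπ = i π Im ν - π/2`, so `sin (νπ) = -cosh (π Im ν) < 0` and `C_k > 0`.
-/

open Complex ComplexConjugate Nat

theorem ascPochhammer_eval_conj (n : ℕ) (x : ℂ) :
    (ascPochhammer ℂ n).eval (conj x) = conj ((ascPochhammer ℂ n).eval x) := by
  rw [ascPochhammer_eval₂ (starRingEnd ℂ), eval₂_at_apply]

theorem summable_ordinaryHypergeometricSeries {𝕂 𝔸 : Type*} [RCLike 𝕂] [NormedDivisionRing 𝔸]
    [NormedAlgebra 𝕂 𝔸] [CompleteSpace 𝔸] {a b c : 𝕂}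
    (habc : ∀ kn : ℕ, (kn : 𝕂) ≠ -a ∧ (kn : 𝕂) ≠ -b ∧ (kn : 𝕂) ≠ -c) {x : 𝔸} (hx : ‖x‖ < 1) :
    Summable fun n => ordinaryHypergeometricSeries 𝔸 a b c n fun _ => x := by
  refine (ordinaryHypergeometricSeries 𝔸 a b c).summable ?_
  rwa [mem_eball_zero_iff, ordinaryHypergeometricSeries_radius_eq_one 𝔸 a b c habc,
    ← ENNReal.coe_one, enorm_lt_coe, ← NNReal.coe_lt_coe]

theorem legendreP_eq_ordinaryHypergeometric (ν z : ℂ) :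
    legendreP ν z = ₂F₁ (-ν) (ν + 1) 1 ((1 - z) / 2) := by
  rw [legendreP, ordinaryHypergeometric, ordinaryHypergeometric_sum_eq]
  refine tsum_congr fun n => ?_
  rw [ascPochhammer_eval_one, smul_eq_mul]
  field_simp

section ReEqNegHalf

variable {ν : ℂ} (hν : ν.re = -1 / 2)
include hν

theorem conj_add_one_eq_neg_of_re_eq_neg_half : conj (ν + 1) = -ν := by
  apply Complex.ext
  · simp [hν]
    norm_num
  · simp

theorem ordinaryHypergeometricSeries_apply_ofReal_of_re_eq_neg_half (n : ℕ) (r : ℝ) :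
    ordinaryHypergeometricSeries ℂ (-ν) (ν + 1) 1 n (fun _ => (r : ℂ)) =
      ((‖(ascPochhammer ℂ n).eval (ν + 1)‖ ^ 2 / (n ! : ℝ) ^ 2 * r ^ n : ℝ) : ℂ) := by
  rw [ordinaryHypergeometricSeries_apply_eq, ← conj_add_one_eq_neg_of_re_eq_neg_half hν,
    ascPochhammer_eval_conj, ascPochhammer_eval_one, smul_eq_mul]
  push_cast
  rw [← conj_mul']
  ring

theorem exists_one_le_legendreP_eq_ofReal_of_re_eq_neg_half {z : ℝ} (hz₁ : -1 < z) (hz₂ : z ≤ 1) :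
    ∃ p : ℝ, 1 ≤ p ∧ legendreP ν z = p := by
  set r : ℝ := (1 - z) / 2
  set g : ℕ → ℝ := fun n => ‖(ascPochhammer ℂ n).eval (ν + 1)‖ ^ 2 / (n ! : ℝ) ^ 2 * r ^ n
  have hterm (n : ℕ) : ordinaryHypergeometricSeries ℂ (-ν) (ν + 1) 1 n (fun _ => (r : ℂ)) = g n :=
    ordinaryHypergeometricSeries_apply_ofReal_of_re_eq_neg_half hν n r
  have hparams (kn : ℕ) : (kn : ℂ) ≠ - -ν ∧ (kn : ℂ) ≠ -(ν + 1) ∧ (kn : ℂ) ≠ -1 := by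
    refine ⟨fun h => ?_, fun h => ?_, fun h => ?_⟩ <;>
      have := congrArg re h <;> simp [hν] at this <;> linarith [(kn.cast_nonneg : (0 : ℝ) ≤ kn)]
  have hg : Summable g := by
    rw [← summable_ofReal]
    simp_rw [← hterm]
    refine summable_ordinaryHypergeometricSeries hparams ?_
    rw [norm_real, Real.norm_eq_abs, abs_lt]
    constructor <;> · dsimp only [r]; linarith
  refine ⟨∑' n, g n, ?_, ?_⟩
  · calc (1 : ℝ) = g 0 := by simp [g]
      _ ≤ ∑' n, g n := hg.le_tsum 0 fun n _ => by positivity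
  · have hr : (1 - (z : ℂ)) / 2 = r := by push_cast [r]; ring
    rw [legendreP_eq_ordinaryHypergeometric, hr, ofReal_tsum, ← tsum_congr hterm]
    rfl

theorem sin_mul_pi_of_re_eq_neg_half : sin (ν * Real.pi) = -Real.cosh (ν.im * Real.pi) := by
  have : ν * Real.pi = ν.im * Real.pi * I - Real.pi / 2 := by
    conv_lhs => rw [← re_add_im ν, hν]
    push_cast
    ring
  rw [this, sin_sub_pi_div_two, ← ofReal_mul, cos_mul_I, ← ofReal_cosh]

end ReEqNegHalf

theorem fundamental_solution_positive_general (k : ℝ) :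
    let ν : ℂ := (-1 + Complex.I * Real.sqrt (4*k^2 - 1)) / 2
    let Ck : ℂ := -1 / (4 * Complex.sin (ν * Real.pi))
    ∀ z : ℝ, -1 < z → z ≤ 1 →
      (legendreP ν (z : ℂ)).im = 0 ∧
      1 ≤ (legendreP ν (z : ℂ)).re ∧
      (Ck * legendreP ν (z : ℂ)).im = 0 ∧
      0 < (Ck * legendreP ν (z : ℂ)).re := by
  intro ν Ck z hz₁ hz₂
  have hν : ν.re = -1 / 2 := by simp [ν]
  obtain ⟨p, hp, hP⟩ := exists_one_le_legendreP_eq_ofReal_of_re_eq_neg_half hν hz₁ hz₂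
  have hCk : Ck = ((4 * Real.cosh (ν.im * Real.pi))⁻¹ : ℝ) := by
    simp only [Ck, sin_mul_pi_of_re_eq_neg_half hν]
    push_cast
    ring
  have hc : 0 < (4 * Real.cosh (ν.im * Real.pi))⁻¹ := by positivity
  rw [hP, hCk, ← ofReal_mul]
  simp only [ofReal_im, ofReal_re, true_and]
  exact ⟨hp, mul_pos hc (one_pos.trans_le hp)⟩

theorem fundamental_solution_positive (k : ℝ) (hk : 1/2 < k) :
    let ν : ℂ := (-1 + Complex.I * Real.sqrt (4*k^2 - 1)) / 2
    let Ck : ℂ := -1 / (4 * Complex.sin (ν * Real.pi))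
    ∀ z : ℝ, -1 < z → z ≤ 1 →
      (legendreP ν (z : ℂ)).im = 0 ∧
      1 ≤ (legendreP ν (z : ℂ)).re ∧
      (Ck * legendreP ν (z : ℂ)).im = 0 ∧
      0 < (Ck * legendreP ν (z : ℂ)).re :=
  fundamental_solution_positive_general k
end

section
/- For every ν ∈ ℂ and every real z with −1 < z < 3, the Legendre functions satisfy the derivative recurrence (1 − z²)·P_ν′(z) = −(ν + 1)·P_{ν+1}(z) + (ν + 1)·z·P_ν(z), where P_ν′ denotes the derivative of the restriction of P_ν to the real interval (−1, 3). -/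
/-!
Writing `w = (1 - z) / 2`, the series says `P_ν(z) = F_ν(w)` with `F_ν = ₂F₁(-ν, ν + 1; 1; ·)`,
a power series of radius at least `1`. Since `1 - z² = 4w(1 - w)` and `d/dz = -½ d/dw`, the
recurrence becomes `(ν + 1) F_{ν+1} = 2w(1 - w) F_ν' + (ν + 1)(1 - 2w) F_ν`, and comparing
coefficients of `w^(n+1)` reduces it to a polynomial identity between Pochhammer symbols.
-/

open Polynomial

open Nat Finset

theorem ascPochhammer_succ_eval_left {S : Type*} [CommSemiring S] (n : ℕ) (a : S) :
    (ascPochhammer S (n + 1)).eval a = a * (ascPochhammer S n).eval (a + 1) := by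
  simp [ascPochhammer_succ_left]

namespace FormalMultilinearSeries

variable {𝕜 F : Type*} [NontriviallyNormedField 𝕜] [NormedAddCommGroup F] [NormedSpace 𝕜 F]
  [CompleteSpace F] (p : FormalMultilinearSeries 𝕜 𝕜 F) {x : 𝕜}

theorem hasDerivAt_sum (hx : ‖x‖ₑ < p.radius) : HasDerivAt p.sum (p.derivSeries.sum x 1) x :=
  (p.hasFDerivAt_sum hx).hasDerivAt

theorem hasSum_derivSeries_sum_apply_one (hx : ‖x‖ₑ < p.radius) :
    HasSum (fun n : ℕ => x ^ n • (n + 1) • p.coeff (n + 1)) (p.derivSeries.sum x 1) := by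
  have hsum := p.derivSeries.hasSum (x := x)
    (by simpa using hx.trans_le p.radius_le_radius_derivSeries)
  simpa using (ContinuousLinearMap.apply 𝕜 F (1 : 𝕜)).hasSum hsum

end FormalMultilinearSeries

theorem contiguous_relation_of_hasSum {𝕜 : Type*} [Field 𝕜] [TopologicalSpace 𝕜]
    [IsTopologicalRing 𝕜] [T2Space 𝕜] {c d : ℕ → 𝕜} {a w F F' G : 𝕜} (h₀ : d 0 = c 0)
    (hrec : ∀ n : ℕ, a * d (n + 1) = (2 * (n + 1) + a) * c (n + 1) - 2 * (n + a) * c n)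
    (hF : HasSum (fun n => c n * w ^ n) F)
    (hF' : HasSum (fun n : ℕ => (n + 1) * c (n + 1) * w ^ n) F')
    (hG : HasSum (fun n => d n * w ^ n) G) :
    a * G = 2 * w * (1 - w) * F' + a * (1 - 2 * w) * F := by
  have hF₁ : HasSum (fun n => c (n + 1) * w ^ (n + 1)) (F - c 0) := by
    simpa using (hasSum_nat_add_iff' 1).mpr hF
  have hG₁ : HasSum (fun n => d (n + 1) * w ^ (n + 1)) (G - d 0) := by
    simpa using (hasSum_nat_add_iff' 1).mpr hG
  have hwF' : HasSum (fun n : ℕ => n * c n * w ^ n) (w * F') := by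
    refine (hasSum_nat_add_iff' 1).mp ?_
    simp only [sum_range_one, Nat.cast_zero, zero_mul, sub_zero, Nat.cast_succ]
    exact (hF'.mul_left w).congr_fun fun n => by ring
  have hcomb := ((hF'.mul_left (2 * w)).add (hF₁.mul_left a)).sub
    ((hwF'.mul_left (2 * w)).add (hF.mul_left (2 * a * w)))
  have hterm : (fun n : ℕ => a * (d (n + 1) * w ^ (n + 1))) = fun n =>
      2 * w * ((n + 1) * c (n + 1) * w ^ n) + a * (c (n + 1) * w ^ (n + 1))
        - (2 * w * (n * c n * w ^ n) + 2 * a * w * (c n * w ^ n)) := by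
    ext n
    linear_combination w ^ (n + 1) * hrec n
  have hG_eq := (hG₁.mul_left a).unique (hterm ▸ hcomb)
  linear_combination hG_eq + a * h₀

noncomputable def legendreCoeff (ν : ℂ) (n : ℕ) : ℂ :=
  (ascPochhammer ℂ n).eval (-ν) * (ascPochhammer ℂ n).eval (ν + 1) / (n ! : ℂ) ^ 2

@[simp]
theorem legendreCoeff_zero (ν : ℂ) : legendreCoeff ν 0 = 1 := by
  simp [legendreCoeff]

theorem legendreCoeff_succ (ν : ℂ) (n : ℕ) :
    (ν + 1) * legendreCoeff (ν + 1) (n + 1)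
      = (2 * (n + 1) + (ν + 1)) * legendreCoeff ν (n + 1)
        - 2 * (n + (ν + 1)) * legendreCoeff ν n := by
  have hl : (ascPochhammer ℂ (n + 1)).eval (-(ν + 1))
      = -(ν + 1) * (ascPochhammer ℂ n).eval (-ν) := by
    rw [ascPochhammer_succ_eval_left]; ring_nf
  have hr : (ν + 1) * (ascPochhammer ℂ n).eval (ν + 1 + 1)
      = (ascPochhammer ℂ n).eval (ν + 1) * (ν + 1 + n) := by
    rw [← ascPochhammer_succ_eval_left, ascPochhammer_succ_eval]
  have hfac : (n ! : ℂ) ≠ 0 := mod_cast n.factorial_ne_zero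
  simp only [legendreCoeff, hl, ascPochhammer_succ_eval, factorial_succ]
  push_cast
  field_simp
  linear_combination (-(ν + 1) * (ascPochhammer ℂ n).eval (-ν) * (ν + 1 + 1 + n)) * hr

/-- For `c = 1` the regularizing factor `Γ(c + n)` is `n!`, so this is `₂F₁(-ν, ν + 1; 1; ·)`. -/
noncomputable def legendreSeries (ν : ℂ) : FormalMultilinearSeries ℂ ℂ ℂ :=
  Complex.regularizedGaussHGFunSeries (-ν) (ν + 1) 1

theorem coeff_legendreSeries (ν : ℂ) (n : ℕ) :
    (legendreSeries ν).coeff n = legendreCoeff ν n := by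
  rw [legendreSeries, Complex.coeff_regularizedGaussHGFunSeries, legendreCoeff, add_comm (1 : ℂ),
    Complex.Gamma_nat_eq_factorial, sq]

theorem one_le_radius_legendreSeries (ν : ℂ) : 1 ≤ (legendreSeries ν).radius :=
  Complex.radius_regularizedGaussHGFunSeries_ge_one _ _ _

theorem legendreP_eq_sum (ν : ℂ) :
    legendreP ν = fun z => (legendreSeries ν).sum ((1 - z) / 2) := by
  ext z
  refine tsum_congr fun n => ?_
  rw [FormalMultilinearSeries.apply_eq_pow_smul_coeff, coeff_legendreSeries, smul_eq_mul,
    legendreCoeff, mul_comm]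

section

variable (ν : ℂ) {w : ℂ} (hw : ‖w‖ₑ < 1)
include hw

theorem hasSum_legendreSeries :
    HasSum (fun n => legendreCoeff ν n * w ^ n) ((legendreSeries ν).sum w) := by
  have hsum := (legendreSeries ν).hasSum (x := w)
    (by simpa using hw.trans_le (one_le_radius_legendreSeries ν))
  simpa [FormalMultilinearSeries.apply_eq_pow_smul_coeff, coeff_legendreSeries, mul_comm]
    using hsum

theorem hasSum_derivSeries_legendreSeries :
    HasSum (fun n : ℕ => (n + 1) * legendreCoeff ν (n + 1) * w ^ n)
      ((legendreSeries ν).derivSeries.sum w 1) := by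
  have hsum := (legendreSeries ν).hasSum_derivSeries_sum_apply_one
    (hw.trans_le (one_le_radius_legendreSeries ν))
  simpa [coeff_legendreSeries, mul_comm, mul_left_comm] using hsum

end

theorem legendreP_derivative_recurrence (ν : ℂ) :
    ∀ z : ℝ, -1 < z → z < 3 →
      (1 - (z : ℂ)^2) * deriv (fun x : ℝ => legendreP ν (x : ℂ)) z
        = -(ν + 1) * legendreP (ν + 1) (z : ℂ)
          + (ν + 1) * (z : ℂ) * legendreP ν (z : ℂ) := by
  intro z hz₁ hz₃
  have hw : ‖(1 - (z : ℂ)) / 2‖ₑ < 1 := by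
    rw [show (1 - (z : ℂ)) / 2 = ((1 - z) / 2 : ℝ) by push_cast; rfl, ← ofReal_norm,
      Complex.norm_real, Real.norm_eq_abs, ENNReal.ofReal_lt_one, abs_lt]
    constructor <;> linarith
  have hderiv : HasDerivAt (fun x : ℝ => legendreP ν x)
      (-((legendreSeries ν).derivSeries.sum ((1 - z) / 2) 1) / 2) z := by
    have hlin : HasDerivAt (fun u : ℂ => (1 - u) / 2) (-1 / 2) (z : ℂ) := by
      simpa using ((hasDerivAt_id (z : ℂ)).const_sub 1).div_const 2
    have hF := (legendreSeries ν).hasDerivAt_sum (hw.trans_le (one_le_radius_legendreSeries ν))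
    rw [legendreP_eq_sum]
    simpa [div_eq_mul_inv] using (hF.comp (z : ℂ) hlin).comp_ofReal
  have hrel := contiguous_relation_of_hasSum (by simp) (legendreCoeff_succ ν)
    (hasSum_legendreSeries ν hw) (hasSum_derivSeries_legendreSeries ν hw)
    (hasSum_legendreSeries (ν + 1) hw)
  rw [hderiv.deriv, legendreP_eq_sum, legendreP_eq_sum]
  linear_combination hrel
end

section
/- Let k > 1/2 be real and ν := (−1 + i·√(4k² − 1))/2. Then lim_{z→1⁻} (ν + 1)·[ P_{ν+1}(−z) + z·P_ν(−z) ] = −(2/π)·sin(νπ) = (2/π)·cosh((π/2)·√(4k² − 1)). Equivalently, with C_k := −1/(4·sin(νπ)), the function F(θ) := C_k·(ν + 1)·[ P_{ν+1}(−cos θ) + cos θ · P_ν(−cos θ) ] tends to 1/(2π) as θ → 0⁺. -/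
open Polynomial Filter Topology

/-!
Put `x = (1 + z) / 2`, so that `P_μ(-z) = ∑ T_μ(n) xⁿ` with `T_μ(n) = (-μ)ₙ (μ+1)ₙ / (n!)²`.
A contiguous relation between `T_{ν+1}` and `T_ν` turns `(ν+1) (P_{ν+1}(-z) + z P_ν(-z))` into a
power series `∑ cₙ xⁿ⁺¹` whose partial sums telescope: `∑_{n<M} cₙ = 2 M T_ν(M)`. Euler's limit
formula for `Γ` gives `M T_ν(M) → 1 / (Γ(-ν) Γ(ν+1)) = -sin(νπ) / π` by the reflection formula, and
Abel's limit theorem carries the value of the series at `x = 1` over to the limit `z → 1⁻`.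
For `ν = (-1 + i√(4k²-1)) / 2` the degree is not an integer and `sin(νπ) = -cosh(π√(4k²-1) / 2)`.
-/

open Finset

theorem ascPochhammer_eval_succ_left {S : Type*} [CommSemiring S] (n : ℕ) (c : S) :
    (ascPochhammer S (n + 1)).eval c = c * (ascPochhammer S n).eval (c + 1) := by
  simp [ascPochhammer_succ_left]

theorem ascPochhammer_eval_eq_prod_range {S : Type*} [CommSemiring S] (n : ℕ) (c : S) :
    (ascPochhammer S n).eval c = ∏ j ∈ range n, (c + j) := by
  induction n with
  | zero => simp
  | succ n ih => rw [ascPochhammer_succ_eval, ih, prod_range_succ]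

noncomputable def legendreTerm (μ : ℂ) (n : ℕ) : ℂ :=
  (ascPochhammer ℂ n).eval (-μ) * (ascPochhammer ℂ n).eval (μ + 1) / (n.factorial : ℂ) ^ 2

theorem legendreP_eq_tsum (μ z : ℂ) :
    legendreP μ z = ∑' n, legendreTerm μ n * ((1 - z) / 2) ^ n := rfl

theorem legendreTerm_zero (μ : ℂ) : legendreTerm μ 0 = 1 := by simp [legendreTerm]

theorem legendreTerm_succ (μ : ℂ) (n : ℕ) :
    legendreTerm μ (n + 1) = legendreTerm μ n * ((n - μ) * (μ + 1 + n) / (n + 1) ^ 2) := by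
  simp only [legendreTerm, ascPochhammer_succ_eval, Nat.factorial_succ]
  push_cast
  field_simp
  ring

theorem legendreTerm_add_one_succ (ν : ℂ) (n : ℕ) :
    legendreTerm (ν + 1) (n + 1)
      = -((ν + n + 1) * (ν + n + 2)) / (n + 1) ^ 2 * legendreTerm ν n := by
  have h₁ :
      (ascPochhammer ℂ (n + 1)).eval (-(ν + 1)) = -(ν + 1) * (ascPochhammer ℂ n).eval (-ν) := by
    rw [ascPochhammer_eval_succ_left]; ring_nf
  have h₂ : (ν + 1) * (ascPochhammer ℂ (n + 1)).eval (ν + 1 + 1)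
      = (ascPochhammer ℂ n).eval (ν + 1) * (ν + 1 + n) * (ν + 1 + (n + 1)) := by
    rw [← ascPochhammer_eval_succ_left, ascPochhammer_succ_eval, ascPochhammer_succ_eval]
    push_cast; ring
  have hf : (n.factorial : ℂ) ≠ 0 := by exact_mod_cast n.factorial_ne_zero
  simp only [legendreTerm, h₁, Nat.factorial_succ]
  push_cast
  field_simp
  linear_combination (-(ascPochhammer ℂ n).eval (-ν)) * h₂

theorem legendreTerm_contiguous (ν : ℂ) (n : ℕ) :
    legendreTerm (ν + 1) (n + 1) - legendreTerm ν (n + 1) + 2 * legendreTerm ν n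
      = -2 * ν * legendreTerm ν n / (n + 1) := by
  rw [legendreTerm_add_one_succ, legendreTerm_succ]
  field_simp
  ring

theorem summable_legendreTerm_mul_pow {μ : ℂ} (hμ : ∀ n : ℤ, μ ≠ n) {x : ℂ} (hx : ‖x‖ < 1) :
    Summable fun n => legendreTerm μ n * x ^ n := by
  have hradius : (ordinaryHypergeometricSeries ℂ (-μ) (μ + 1) (1 : ℂ)).radius = 1 := by
    refine ordinaryHypergeometricSeries_radius_eq_one ℂ _ _ _ fun n => ⟨?_, ?_, ?_⟩
    · simpa [eq_comm] using hμ n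
    · intro h; exact hμ (-(n + 1)) (by push_cast; linear_combination h)
    · intro h
      have : (n : ℤ) = -1 := by exact_mod_cast h
      omega
  have hsum := (ordinaryHypergeometricSeries ℂ (-μ) (μ + 1) (1 : ℂ)).summable_norm_apply
    (x := x) (by
      rwa [hradius, Metric.mem_eball, edist_zero_right, ← ofReal_norm, ENNReal.ofReal_lt_one])
  refine hsum.of_norm.congr fun n => ?_
  rw [ordinaryHypergeometricSeries_apply_eq, ascPochhammer_eval_one, legendreTerm, smul_eq_mul]
  field_simp

noncomputable def legendreKernelCoeff (ν : ℂ) (n : ℕ) : ℂ :=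
  -2 * ν * (ν + 1) * legendreTerm ν n / (n + 1)

theorem hasSum_legendreKernelCoeff_mul_pow {ν : ℂ} (hν : ∀ n : ℤ, ν ≠ n) {w : ℂ}
    (hw : ‖(1 - w) / 2‖ < 1) :
    HasSum (fun n => legendreKernelCoeff ν n * ((1 - w) / 2) ^ (n + 1))
      ((ν + 1) * (legendreP (ν + 1) w - w * legendreP ν w)) := by
  set x := (1 - w) / 2 with hx_def
  have hν₁ : ∀ n : ℤ, ν + 1 ≠ n := fun n h => hν (n - 1) (by push_cast; linear_combination h)
  have h₁ : HasSum (fun n => legendreTerm (ν + 1) n * x ^ n) (legendreP (ν + 1) w) := by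
    rw [legendreP_eq_tsum]; exact (summable_legendreTerm_mul_pow hν₁ hw).hasSum
  have h₀ : HasSum (fun n => legendreTerm ν n * x ^ n) (legendreP ν w) := by
    rw [legendreP_eq_tsum]; exact (summable_legendreTerm_mul_pow hν hw).hasSum
  have hdiff : HasSum (fun n => legendreTerm (ν + 1) (n + 1) * x ^ (n + 1)
      - legendreTerm ν (n + 1) * x ^ (n + 1)) (legendreP (ν + 1) w - legendreP ν w) := by
    simpa [legendreTerm_zero] using (hasSum_nat_add_iff' 1).mpr (h₁.sub h₀)
  have hshift : HasSum (fun n => 2 * legendreTerm ν n * x ^ (n + 1)) (2 * x * legendreP ν w) :=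
    (h₀.mul_left (2 * x)).congr_fun fun n => by ring
  have hw_eq : w = 1 - 2 * x := by rw [hx_def]; ring
  rw [show (ν + 1) * (legendreP (ν + 1) w - w * legendreP ν w)
      = (ν + 1) * (legendreP (ν + 1) w - legendreP ν w + 2 * x * legendreP ν w) by
    nth_rewrite 2 [hw_eq]; ring]
  refine ((hdiff.add hshift).mul_left (ν + 1)).congr_fun fun n => ?_
  rw [legendreKernelCoeff]
  linear_combination (-(ν + 1) * x ^ (n + 1)) * legendreTerm_contiguous ν n

theorem sum_range_legendreKernelCoeff (ν : ℂ) (M : ℕ) :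
    ∑ n ∈ range M, legendreKernelCoeff ν n = 2 * M * legendreTerm ν M := by
  induction M with
  | zero => simp
  | succ M ih =>
    rw [sum_range_succ, ih, legendreTerm_succ, legendreKernelCoeff]
    push_cast
    field_simp
    ring

theorem natCast_mul_legendreTerm_eq_div_GammaSeq (ν : ℂ) {n : ℕ} (hn : n ≠ 0) :
    ((n + 1 : ℕ) : ℂ) * legendreTerm ν (n + 1)
      = n / (n + 1) / (Complex.GammaSeq (-ν) n * Complex.GammaSeq (ν + 1) n) := by
  have hpow : (n : ℂ) ^ (-ν) * (n : ℂ) ^ (ν + 1) = n := by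
    rw [← Complex.cpow_add _ _ (Nat.cast_ne_zero.mpr hn), neg_add_cancel_left, Complex.cpow_one]
  have hf : (n.factorial : ℂ) ≠ 0 := by exact_mod_cast n.factorial_ne_zero
  have hn' : (n : ℂ) ≠ 0 := Nat.cast_ne_zero.mpr hn
  rw [Complex.GammaSeq, Complex.GammaSeq, div_mul_div_comm, mul_mul_mul_comm, hpow, legendreTerm,
    ascPochhammer_eval_eq_prod_range, ascPochhammer_eval_eq_prod_range, Nat.factorial_succ]
  push_cast
  field_simp

theorem tendsto_natCast_mul_legendreTerm {ν : ℂ} (hν : ∀ n : ℤ, ν ≠ n) :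
    Tendsto (fun n : ℕ => (n : ℂ) * legendreTerm ν n) atTop
      (𝓝 (-Complex.sin (ν * Real.pi) / Real.pi)) := by
  have hΓ : Complex.Gamma (-ν) * Complex.Gamma (ν + 1) ≠ 0 := by
    refine mul_ne_zero (Complex.Gamma_ne_zero fun m h => hν m ?_)
      (Complex.Gamma_ne_zero fun m h => hν (-(m + 1)) ?_)
    · simpa using h
    · push_cast; linear_combination h
  have hreflection : 1 / (Complex.Gamma (-ν) * Complex.Gamma (ν + 1))
      = -Complex.sin (ν * Real.pi) / Real.pi := by
    rw [show ν + 1 = 1 - -ν by ring, Complex.Gamma_mul_Gamma_one_sub, one_div_div, mul_neg,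
      Complex.sin_neg, mul_comm, neg_div]
  rw [← tendsto_add_atTop_iff_nat 1, ← hreflection]
  refine ((tendsto_natCast_div_add_atTop (1 : ℂ)).div ((Complex.GammaSeq_tendsto_Gamma _).mul
    (Complex.GammaSeq_tendsto_Gamma _)) hΓ).congr' ?_
  filter_upwards [eventually_ne_atTop 0] with n hn
  exact (natCast_mul_legendreTerm_eq_div_GammaSeq ν hn).symm

theorem tendsto_sum_range_legendreKernelCoeff {ν : ℂ} (hν : ∀ n : ℤ, ν ≠ n) :
    Tendsto (fun M => ∑ n ∈ range M, legendreKernelCoeff ν n) atTop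
      (𝓝 (-(2 / (Real.pi : ℂ)) * Complex.sin (ν * Real.pi))) := by
  simp_rw [sum_range_legendreKernelCoeff, mul_assoc]
  convert (tendsto_natCast_mul_legendreTerm hν).const_mul 2 using 2
  ring

theorem tendsto_legendre_kernel_nhdsLT_one {ν : ℂ} (hν : ∀ n : ℤ, ν ≠ n) :
    Tendsto
      (fun z : ℝ => (ν + 1) * (legendreP (ν + 1) (-(z : ℂ)) + (z : ℂ) * legendreP ν (-(z : ℂ))))
      (𝓝[<] 1) (𝓝 (-(2 / (Real.pi : ℂ)) * Complex.sin (ν * Real.pi))) := by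
  have hx : Tendsto (fun z : ℝ => (1 + z) / 2) (𝓝[<] 1) (𝓝[<] 1) := by
    refine tendsto_nhdsWithin_of_tendsto_nhds_of_eventually_within _ ?_ ?_
    · exact (((continuous_const.add continuous_id).div_const 2).tendsto' 1 1
        (by norm_num)).mono_left nhdsWithin_le_nhds
    · filter_upwards [self_mem_nhdsWithin] with z (hz : z < 1)
      rw [Set.mem_Iio]
      linarith
  have habel := (Complex.tendsto_tsum_powerSeries_nhdsWithin_lt
    (tendsto_sum_range_legendreKernelCoeff hν)).comp (tendsto_map.comp hx)
  have hxC : Tendsto (fun z : ℝ => (((1 + z) / 2 : ℝ) : ℂ)) (𝓝[<] 1) (𝓝 1) := by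
    simpa only [Function.comp_def, Complex.ofReal_one] using
      (Complex.continuous_ofReal.tendsto 1).comp (tendsto_nhds_of_tendsto_nhdsWithin hx)
  refine (one_mul (M := ℂ) _ ▸ hxC.mul habel).congr' ?_
  filter_upwards [Ioo_mem_nhdsLT (show (-1 : ℝ) < 1 by norm_num)] with z hz
  set x : ℂ := (((1 + z) / 2 : ℝ) : ℂ) with hx_def
  have hw : (1 - -(z : ℂ)) / 2 = x := by rw [hx_def]; push_cast; ring
  have hsum := hasSum_legendreKernelCoeff_mul_pow hν (w := -(z : ℂ)) (by
    rw [hw, Complex.norm_real, Real.norm_eq_abs, abs_lt]; constructor <;> linarith [hz.1, hz.2])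
  rw [hw] at hsum
  calc x * ∑' n, legendreKernelCoeff ν n * x ^ n
      = ∑' n, legendreKernelCoeff ν n * x ^ (n + 1) := by
        rw [← tsum_mul_left]; congr 1; funext n; ring
    _ = _ := by rw [hsum.tsum_eq]; ring

theorem Complex.sin_neg_one_add_I_mul_div_two_mul_pi (t : ℝ) :
    Complex.sin ((-1 + Complex.I * t) / 2 * Real.pi) = -(Real.cosh (Real.pi / 2 * t) : ℂ) := by
  rw [show (-1 + Complex.I * t) / 2 * Real.pi
      = ((Real.pi / 2 * t : ℝ) : ℂ) * Complex.I - Real.pi / 2 by push_cast; ring,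
    Complex.sin_sub_pi_div_two, Complex.cos_mul_I, Complex.ofReal_cosh]

theorem tendsto_cos_nhdsGT_zero : Tendsto Real.cos (𝓝[>] 0) (𝓝[<] 1) := by
  refine tendsto_nhdsWithin_of_tendsto_nhds_of_eventually_within _
    (Real.cos_zero ▸ Real.continuous_cos.tendsto 0 |>.mono_left nhdsWithin_le_nhds) ?_
  filter_upwards [Ioo_mem_nhdsGT Real.pi_pos] with θ hθ
  rw [Set.mem_Iio, ← Real.cos_zero]
  exact Real.strictAntiOn_cos ⟨le_rfl, Real.pi_pos.le⟩ ⟨hθ.1.le, hθ.2.le⟩ hθ.1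

theorem double_layer_kernel_diagonal_limit (k : ℝ) (hk : 1/2 < k) :
    let ν : ℂ := (-1 + Complex.I * Real.sqrt (4*k^2 - 1)) / 2
    let Ck : ℂ := -1 / (4 * Complex.sin (ν * Real.pi))
    Tendsto
      (fun z : ℝ => (ν + 1) * (legendreP (ν + 1) (-(z : ℂ)) + (z : ℂ) * legendreP ν (-(z : ℂ))))
      (nhdsWithin 1 (Set.Iio 1))
      (nhds (-(2 / (Real.pi : ℂ)) * Complex.sin (ν * Real.pi))) ∧
    -(2 / (Real.pi : ℂ)) * Complex.sin (ν * Real.pi)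
      = (2 / (Real.pi : ℂ)) * ((Real.cosh (Real.pi/2 * Real.sqrt (4*k^2 - 1)) : ℝ) : ℂ) ∧
    Tendsto
      (fun θ : ℝ => Ck * (ν + 1) *
        (legendreP (ν + 1) (-(Real.cos θ) : ℂ) + ((Real.cos θ : ℝ) : ℂ) * legendreP ν (-(Real.cos θ) : ℂ)))
      (nhdsWithin 0 (Set.Ioi 0))
      (nhds ((1 / (2 * Real.pi) : ℝ) : ℂ)) := by
  intro ν Ck
  have ht : 0 < Real.sqrt (4 * k ^ 2 - 1) := Real.sqrt_pos.mpr (by nlinarith)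
  have him : ν.im = Real.sqrt (4 * k ^ 2 - 1) / 2 := by simp [ν]
  have hν : ∀ n : ℤ, ν ≠ n := fun n h => by
    have := congrArg Complex.im h
    rw [him, Complex.intCast_im] at this
    linarith
  have hsin :
      Complex.sin (ν * Real.pi) = -(Real.cosh (Real.pi / 2 * Real.sqrt (4 * k ^ 2 - 1)) : ℂ) :=
    Complex.sin_neg_one_add_I_mul_div_two_mul_pi _
  have hlimit := tendsto_legendre_kernel_nhdsLT_one hν
  refine ⟨hlimit, by rw [hsin]; ring, ?_⟩
  have hCk :
      Ck * (-(2 / (Real.pi : ℂ)) * Complex.sin (ν * Real.pi)) = ((1 / (2 * Real.pi) : ℝ) : ℂ) := by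
    have : Complex.sin (ν * Real.pi) ≠ 0 := by
      rw [hsin, neg_ne_zero, Complex.ofReal_ne_zero]; exact (Real.cosh_pos _).ne'
    simp only [Ck]
    push_cast
    field_simp
    ring
  simpa only [hCk, mul_assoc, Function.comp_def, Complex.ofReal_neg] using
    (hlimit.comp tendsto_cos_nhdsGT_zero).const_mul Ck
end

section
/- Let γ : ℝ → ℝ³ be a twice continuously differentiable curve lying on the unit sphere (‖γ(s)‖ = 1 for all s) and parametrized by arc length (‖γ′(s)‖ = 1 for all s). Then lim_{s→0, s≠0} ⟨γ(0) − γ(s), γ′(s) × γ(s)⟩ / ‖γ(0) − γ(s)‖² = −(1/2)·⟨γ′(0), γ″(0) × γ(0)⟩. (Here γ″(0) = κ·n_p with κ the curvature and n_p the principal normal of γ at γ(0).) -/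
/-!
Since `γ s ⟂ γ' s × γ s`, the numerator is `F s = ⟪γ 0, γ' s × γ s⟫`. This vanishes at `0`, and
since `γ' × γ' = 0` its derivative is `⟪γ 0, γ'' s × γ s⟫ = ⟪γ 0, γ'' s × (γ s - γ 0)⟫`. By
L'Hôpital, `F s / s²` therefore tends to `½ ⟪γ 0, γ'' 0 × γ' 0⟫ = -½ ⟪γ' 0, γ'' 0 × γ 0⟫`, which
only needs `γ''` to be continuous. The denominator satisfies `‖γ 0 - γ s‖² / s² → ‖γ' 0‖² = 1`.
-/

open Filter Topology

/-- The cross product on `EuclideanSpace ℝ (Fin 3)`. -/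
noncomputable def cross3 (u v : EuclideanSpace ℝ (Fin 3)) : EuclideanSpace ℝ (Fin 3) :=
  (EuclideanSpace.equiv (Fin 3) ℝ).symm
    ![u 1 * v 2 - u 2 * v 1, u 2 * v 0 - u 0 * v 2, u 0 * v 1 - u 1 * v 0]

open WithLp Matrix

local notation "E³" => EuclideanSpace ℝ (Fin 3)

theorem cross3_eq_crossProduct (u v : E³) : cross3 u v = toLp 2 (ofLp u ⨯₃ ofLp v) :=
  rfl

theorem inner_cross3_eq_dotProduct (u v w : E³) :
    inner ℝ w (cross3 u v) = ofLp w ⬝ᵥ (ofLp u ⨯₃ ofLp v) := by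
  simp [cross3_eq_crossProduct, EuclideanSpace.inner_eq_star_dotProduct, dotProduct_comm]

theorem inner_cross3_self_right (u v : E³) : inner ℝ v (cross3 u v) = 0 := by
  simp [inner_cross3_eq_dotProduct]

theorem cross3_self (u : E³) : cross3 u u = 0 := by
  simp [cross3_eq_crossProduct]

theorem inner_cross3_anticomm (u v w : E³) :
    inner ℝ w (cross3 u v) = -inner ℝ v (cross3 u w) := by
  rw [inner_cross3_eq_dotProduct, inner_cross3_eq_dotProduct, triple_product_permutation,
    triple_product_permutation, ← cross_anticomm, dotProduct_neg]

noncomputable def cross3CLM : E³ →L[ℝ] E³ →L[ℝ] E³ :=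
  LinearMap.toContinuousBilinearMap <|
    let e := WithLp.linearEquiv 2 ℝ (Fin 3 → ℝ)
    (crossProduct.compl₁₂ e.toLinearMap e.toLinearMap).compr₂ e.symm.toLinearMap

@[simp]
theorem cross3CLM_apply (u v : E³) : cross3CLM u v = cross3 u v := by
  simp [cross3CLM, LinearMap.toContinuousBilinearMap_apply, cross3_eq_crossProduct]

theorem HasDerivAt.cross3 {f g : ℝ → E³} {f' g' : E³} {x : ℝ} (hf : HasDerivAt f f' x)
    (hg : HasDerivAt g g' x) :
    HasDerivAt (fun t => cross3 (f t) (g t)) (cross3 f' (g x) + cross3 (f x) g') x := by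
  simpa [add_comm] using cross3CLM.hasDerivAt_of_bilinear (fun _ => hf) (fun _ => hg)

theorem Filter.Tendsto.cross3 {α : Type*} {l : Filter α} {f g : α → E³} {a b : E³}
    (hf : Tendsto f l (𝓝 a)) (hg : Tendsto g l (𝓝 b)) :
    Tendsto (fun t => _root_.cross3 (f t) (g t)) l (𝓝 (_root_.cross3 a b)) := by
  simpa [Function.comp_def] using (cross3CLM.continuous₂.tendsto (a, b)).comp (hf.prodMk_nhds hg)

theorem HasDerivAt.tendsto_norm_sub_sq_div_sq {F : Type*} [NormedAddCommGroup F]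
    [NormedSpace ℝ F] {f : ℝ → F} {f' : F} {x : ℝ} (hf : HasDerivAt f f' x) :
    Tendsto (fun s => ‖f x - f s‖ ^ 2 / (s - x) ^ 2) (𝓝[≠] x) (𝓝 (‖f'‖ ^ 2)) := by
  refine (((continuous_norm.tendsto _).comp hf.tendsto_slope).pow 2).congr fun s => ?_
  simp [slope_def_module, norm_smul, mul_pow, norm_sub_rev (f x), div_eq_inv_mul]

theorem tendsto_div_sq_of_hasDerivAt {F F' : ℝ → ℝ} {x L : ℝ}
    (hF : ∀ᶠ s in 𝓝 x, HasDerivAt F (F' s) s) (hx : F x = 0)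
    (hF' : Tendsto (fun s => F' s / (2 * (s - x))) (𝓝[≠] x) (𝓝 L)) :
    Tendsto (fun s => F s / (s - x) ^ 2) (𝓝[≠] x) (𝓝 L) := by
  refine HasDerivAt.lhopital_zero_nhdsNE (nhdsWithin_le_nhds hF) ?_ ?_ ?_ ?_ hF'
  · refine Eventually.of_forall fun s => ?_
    simpa using ((hasDerivAt_id s).sub_const x).fun_pow 2
  · filter_upwards [self_mem_nhdsWithin] with s hs
    exact mul_ne_zero two_ne_zero (sub_ne_zero.mpr hs)
  · simpa [hx] using hF.self_of_nhds.continuousAt.tendsto.mono_left nhdsWithin_le_nhds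
  · have : Continuous fun s : ℝ => (s - x) ^ 2 := by fun_prop
    simpa using this.continuousAt.tendsto.mono_left (nhdsWithin_le_nhds (a := x))

theorem tendsto_inner_sub_cross3_div_sq {γ : ℝ → E³} {x : ℝ} (h₁ : Differentiable ℝ γ)
    (h₂ : Differentiable ℝ (deriv γ)) (h₃ : ContinuousAt (deriv (deriv γ)) x) :
    Tendsto (fun s => inner ℝ (γ x - γ s) (cross3 (deriv γ s) (γ s)) / (s - x) ^ 2) (𝓝[≠] x)
      (𝓝 (-(1 / 2) * inner ℝ (deriv γ x) (cross3 (deriv (deriv γ) x) (γ x)))) := by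
  set F := fun s => inner ℝ (γ x) (cross3 (deriv γ s) (γ s))
  have hnum (s : ℝ) : inner ℝ (γ x - γ s) (cross3 (deriv γ s) (γ s)) = F s := by
    simp [F, inner_sub_left, inner_cross3_self_right]
  have hF (s : ℝ) : HasDerivAt F (inner ℝ (γ x) (cross3 (deriv (deriv γ) s) (γ s))) s := by
    simpa [cross3_self] using
      (hasDerivAt_const s (γ x)).inner ℝ ((h₂ s).hasDerivAt.cross3 (h₁ s).hasDerivAt)
  have hF' : Tendsto (fun s => inner ℝ (γ x) (cross3 (deriv (deriv γ) s) (γ s)) / (2 * (s - x)))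
      (𝓝[≠] x) (𝓝 (-(1 / 2) * inner ℝ (deriv γ x) (cross3 (deriv (deriv γ) x) (γ x)))) := by
    have hslope := (h₁ x).hasDerivAt.tendsto_slope
    have h := ((tendsto_const_nhds (x := γ x)).inner (𝕜 := ℝ)
      ((h₃.tendsto.mono_left nhdsWithin_le_nhds).cross3 hslope)).const_mul (1 / 2)
    rw [inner_cross3_anticomm, mul_neg, ← neg_mul] at h
    refine h.congr' ?_
    filter_upwards [self_mem_nhdsWithin] with s hs
    rw [slope_def_module, ← cross3CLM_apply, map_smul, map_sub, cross3CLM_apply, cross3CLM_apply,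
      inner_smul_right, inner_sub_right, inner_cross3_self_right, sub_zero]
    field_simp
  simpa only [hnum] using
    tendsto_div_sq_of_hasDerivAt (Eventually.of_forall hF) (inner_cross3_self_right _ _) hF'

theorem double_layer_geometric_limit_general
    (γ : ℝ → EuclideanSpace ℝ (Fin 3))
    (hγ : ContDiff ℝ 2 γ)
    (harc : ∀ s : ℝ, ‖deriv γ s‖ = 1) :
    Tendsto
      (fun s : ℝ =>
        (inner ℝ (γ 0 - γ s) (cross3 (deriv γ s) (γ s)) : ℝ) / ‖γ 0 - γ s‖^2)
      (nhdsWithin 0 {(0 : ℝ)}ᶜ)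
      (nhds (-(1/2) * (inner ℝ (deriv γ 0) (cross3 (deriv (deriv γ) 0) (γ 0)) : ℝ))) := by
  have h₁ : Differentiable ℝ γ := hγ.differentiable (by norm_num)
  have h₂ : Differentiable ℝ (deriv γ) := hγ.differentiable_deriv_two
  have h₃ : Continuous (deriv (deriv γ)) := (hγ.deriv' (n := 1)).continuous_deriv_one
  have hnum := tendsto_inner_sub_cross3_div_sq h₁ h₂ h₃.continuousAt (x := 0)
  have hden := (h₁ 0).hasDerivAt.tendsto_norm_sub_sq_div_sq
  rw [harc, one_pow] at hden
  simp only [sub_zero] at hnum hden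
  have hlim := hnum.div hden one_ne_zero
  rw [div_one] at hlim
  refine hlim.congr' ?_
  filter_upwards [self_mem_nhdsWithin] with s hs
  exact div_div_div_cancel_right₀ (pow_ne_zero 2 hs) _ _

theorem double_layer_geometric_limit
    (γ : ℝ → EuclideanSpace ℝ (Fin 3))
    (hγ : ContDiff ℝ 2 γ)
    (hsphere : ∀ s : ℝ, ‖γ s‖ = 1)
    (harc : ∀ s : ℝ, ‖deriv γ s‖ = 1) :
    Tendsto
      (fun s : ℝ =>
        (inner ℝ (γ 0 - γ s) (cross3 (deriv γ s) (γ s)) : ℝ) / ‖γ 0 - γ s‖^2)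
      (nhdsWithin 0 {(0 : ℝ)}ᶜ)
      (nhds (-(1/2) * (inner ℝ (deriv γ 0) (cross3 (deriv (deriv γ) 0) (γ 0)) : ℝ))) :=
  double_layer_geometric_limit_general γ hγ harc
end
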